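/- arXiv:0810.2767 — 3 statements merged into one kernel-verified Lean document; each statement's English description precedes it below -/
import Mathlib

section
/- The generalized Jucys-Murphy elements ξ_1,...,ξ_n of the group algebra F[G_n] of the wreath product G_n = G^n ⋊ S_n pairwise commute, where ξ_k = Σ_{l=k+1}^{n} Σ_{h∈G} (h^{(k)}(h^{-1})^{(l)}, (k,l)). -/
open MonoidAlgebra

/-- The action of `S_n` on `G^n` by permuting coordinates: `(w • g) i = g (w⁻¹ i)`. -/
def permHom (G : Type*) [Group G] (n : ℕ) : Equiv.Perm (Fin n) →* MulAut (Fin n → G) where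
  toFun σ :=
    { toFun := fun g => g ∘ σ.symm
      invFun := fun g => g ∘ σ
      left_inv := fun g => by ext i; simp
      right_inv := fun g => by ext i; simp
      map_mul' := fun g h => rfl }
  map_one' := by ext g i; simp [Equiv.Perm.one_def]
  map_mul' := fun σ τ => by ext g i; simp [Equiv.Perm.mul_def]

/-- The wreath product `G_n = G^n ⋊ S_n`. -/
abbrev Wreath (G : Type*) [Group G] (n : ℕ) :=
  SemidirectProduct (Fin n → G) (Equiv.Perm (Fin n)) (permHom G n)

/-- `h^{(i)} ∈ G^n`: the tuple with `h` in the `i`-th coordinate and `1` elsewhere. -/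
def coordEl {G : Type*} [Group G] {n : ℕ} (i : Fin n) (h : G) : Fin n → G :=
  fun j => if j = i then h else 1

/-- The generalized Jucys-Murphy element
`ξ_k = Σ_{l>k} Σ_{h∈G} (h^{(k)} (h⁻¹)^{(l)}, (k,l)) ∈ F[G_n]`. -/
noncomputable def jmElem (F : Type*) [Field F] (G : Type*) [Group G] [Fintype G] (n : ℕ)
    (k : Fin n) : MonoidAlgebra F (Wreath G n) :=
  ∑ l ∈ Finset.Ioi k, ∑ h : G,
    single (⟨coordEl k h * coordEl l h⁻¹, Equiv.swap k l⟩ : Wreath G n) 1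

/-!
Write `ξ_k = Σ_{m>k} τ_{km}` with `τ_{ij} = t_{ij} (i,j) ∈ F[G_n]`, so that `τ_{ij} = τ_{ji}`.
For `k < l < p` and `σ = (l,p)` one has `τ_{km} τ_{lp} = τ_{lp} τ_{k,σm}`: a braid relation
`τ_{kl} τ_{lp} = τ_{lp} τ_{kp}` when `m ∈ {l,p}` (reindex the sum over `G` by `h ↦ h g`), and
commutation of disjoint terms otherwise. Since `σ` permutes `{m | m > k}`, `ξ_k` commutes with
every `τ_{lp}`, hence with `ξ_l`.
-/

namespace JucysMurphy

variable {G : Type*} [Group G] {n : ℕ}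

lemma permHom_coordEl (σ : Equiv.Perm (Fin n)) (i : Fin n) (h : G) :
    permHom G n σ (coordEl i h) = coordEl (σ i) h := by
  funext x
  simp [permHom, coordEl, Equiv.symm_apply_eq]

/-- The summand `(h^{(i)} (h⁻¹)^{(j)}, (i,j))` of `t_{ij} (i,j)`. -/
def term (i j : Fin n) (h : G) : Wreath G n :=
  ⟨coordEl i h * coordEl j h⁻¹, Equiv.swap i j⟩

lemma term_mul_term (i j a b : Fin n) (h g : G) :
    term i j h * term a b g =
      ⟨coordEl i h * coordEl j h⁻¹ *
          (coordEl (Equiv.swap i j a) g * coordEl (Equiv.swap i j b) g⁻¹),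
        Equiv.swap i j * Equiv.swap a b⟩ := by
  refine SemidirectProduct.ext ?_ rfl
  simp only [term, SemidirectProduct.mul_left, map_mul, permHom_coordEl]

lemma term_swap (i j : Fin n) (h : G) : term j i h⁻¹ = term i j h := by
  refine SemidirectProduct.ext ?_ (Equiv.swap_comm j i)
  funext x
  simp only [term, coordEl, Pi.mul_apply, inv_inv]
  split_ifs <;> simp_all

lemma term_braid {k l p : Fin n} (hkl : k ≠ l) (hkp : k ≠ p) (hlp : l ≠ p) (h g : G) :
    term k l h * term l p g = term l p g * term k p (h * g) := by
  simp only [term_mul_term, Equiv.swap_apply_right]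
  rw [Equiv.swap_apply_of_ne_of_ne hkp.symm hlp.symm, Equiv.swap_apply_of_ne_of_ne hkl hkp]
  refine SemidirectProduct.ext ?_ ?_
  · funext x
    simp only [coordEl, Pi.mul_apply]
    split_ifs <;> simp_all
  · ext x
    simp only [Equiv.Perm.mul_apply, Equiv.swap_apply_def]
    split_ifs <;> simp_all

lemma commute_term_of_disjoint {k m l p : Fin n} (hkl : k ≠ l) (hkp : k ≠ p) (hml : m ≠ l)
    (hmp : m ≠ p) (h g : G) : Commute (term k m h) (term l p g) := by
  rw [Commute, SemiconjBy, term_mul_term, term_mul_term,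
    Equiv.swap_apply_of_ne_of_ne hkl.symm hml.symm, Equiv.swap_apply_of_ne_of_ne hkp.symm hmp.symm,
    Equiv.swap_apply_of_ne_of_ne hkl hkp, Equiv.swap_apply_of_ne_of_ne hml hmp]
  refine SemidirectProduct.ext ?_ ?_
  · funext x
    simp only [coordEl, Pi.mul_apply]
    split_ifs <;> simp_all
  · ext x
    simp only [Equiv.Perm.mul_apply, Equiv.swap_apply_def]
    split_ifs <;> simp_all

section Algebra

variable (R : Type*) [Semiring R] [Fintype G]

/-- `t_{ij} (i,j) ∈ R[G_n]`. -/
noncomputable def pair (i j : Fin n) : MonoidAlgebra R (Wreath G n) :=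
  ∑ h : G, single (term i j h) 1

lemma pair_comm (i j : Fin n) : pair (G := G) R i j = pair R j i :=
  Fintype.sum_equiv (Equiv.inv G) _ _ fun h => by rw [Equiv.inv_apply, term_swap]

lemma pair_braid {k l p : Fin n} (hkl : k ≠ l) (hkp : k ≠ p) (hlp : l ≠ p) :
    pair (G := G) R k l * pair R l p = pair R l p * pair R k p := by
  simp only [pair, Finset.sum_mul_sum, single_mul_single, one_mul]
  rw [Finset.sum_comm]
  refine Finset.sum_congr rfl fun g _ => ?_
  refine Fintype.sum_equiv (Equiv.mulRight g) _ _ fun h => ?_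
  rw [term_braid hkl hkp hlp, Equiv.coe_mulRight]

lemma commute_pair_of_disjoint {k m l p : Fin n} (hkl : k ≠ l) (hkp : k ≠ p) (hml : m ≠ l)
    (hmp : m ≠ p) : Commute (pair (G := G) R k m) (pair R l p) :=
  Commute.sum_left _ _ _ fun h _ => Commute.sum_right _ _ _ fun g _ =>
    single_commute_single (commute_term_of_disjoint hkl hkp hml hmp h g) (.refl 1)

lemma pair_mul_pair_eq_pair_mul_pair_swap {k l p : Fin n} (hkl : k ≠ l) (hkp : k ≠ p)
    (hlp : l ≠ p) (m : Fin n) :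
    pair (G := G) R k m * pair R l p = pair R l p * pair R k (Equiv.swap l p m) := by
  rcases eq_or_ne m l with rfl | hml
  · rw [Equiv.swap_apply_left, pair_braid R hkl hkp hlp]
  rcases eq_or_ne m p with rfl | hmp
  · rw [Equiv.swap_apply_right, ← pair_comm R m l]
    exact pair_braid R hkp hkl hlp.symm
  · rw [Equiv.swap_apply_of_ne_of_ne hml hmp]
    exact commute_pair_of_disjoint R hkl hkp hml hmp

lemma commute_sum_pair {k l p : Fin n} (hkl : k < l) (hlp : l < p) :
    Commute (∑ m ∈ Finset.Ioi k, pair (G := G) R k m) (pair R l p) := by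
  have hsupp : {m | Equiv.swap l p m ≠ m} ⊆ Finset.Ioi k := fun m hm => by
    rcases (Equiv.swap_apply_ne_self_iff.mp hm).2 with rfl | rfl
    · exact Finset.mem_Ioi.mpr hkl
    · exact Finset.mem_Ioi.mpr (hkl.trans hlp)
  calc (∑ m ∈ Finset.Ioi k, pair R k m) * pair R l p
      = ∑ m ∈ Finset.Ioi k, pair R l p * pair R k (Equiv.swap l p m) := by
        rw [Finset.sum_mul]
        exact Finset.sum_congr rfl fun m _ =>
          pair_mul_pair_eq_pair_mul_pair_swap R hkl.ne (hkl.trans hlp).ne hlp.ne m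
    _ = pair R l p * ∑ m ∈ Finset.Ioi k, pair R k m := by
        rw [(Equiv.swap l p).sum_comp _ (fun m => pair R l p * pair R k m) hsupp, Finset.mul_sum]

end Algebra

lemma jmElem_eq_sum_pair (F : Type*) [Field F] [Fintype G] (k : Fin n) :
    jmElem F G n k = ∑ m ∈ Finset.Ioi k, pair F k m :=
  rfl

lemma commute_jmElem_of_lt (F : Type*) [Field F] [Fintype G] {k l : Fin n} (hkl : k < l) :
    Commute (jmElem F G n k) (jmElem F G n l) := by
  rw [jmElem_eq_sum_pair F k, jmElem_eq_sum_pair F l]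
  exact Commute.sum_right _ _ _ fun p hp => commute_sum_pair F hkl (Finset.mem_Ioi.mp hp)

end JucysMurphy

/-- The generalized Jucys-Murphy elements `ξ_1, …, ξ_n` pairwise commute. -/
theorem jmElem_pairwise_commute (F : Type*) [Field F] (G : Type*) [Group G] [Fintype G]
    (n : ℕ) (k l : Fin n) :
    jmElem F G n k * jmElem F G n l = jmElem F G n l * jmElem F G n k := by
  rcases lt_trichotomy k l with hkl | rfl | hlk
  · exact (JucysMurphy.commute_jmElem_of_lt F hkl).eq
  · rfl
  · exact (JucysMurphy.commute_jmElem_of_lt F hlk).eq.symm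
end

section
/- The map Φ: F[Ḡ_n] → F[G_n] defined on generators by g ↦ g (g ∈ G^n), s_i ↦ (i,i+1), ε_j ↦ 0 is a well-defined algebra homomorphism extending the identity on the subalgebra F[G_n]. -/
open MonoidAlgebra

/-- The group algebra `ℤ[G]`, used as an ambient ring in which `G ∪ {0}` embeds as
`{0} ∪ {single g 1 | g ∈ G}`. -/
abbrev GA (G : Type*) [Group G] := MonoidAlgebra ℤ G

/-- `a` is an entry in `G ∪ {0}`. -/
def IsEnt {G : Type*} [Group G] (a : GA G) : Prop := a = 0 ∨ ∃ g : G, a = single g 1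

/-- An `n × n` matrix with entries in `G ∪ {0}` such that every row and every column
contains at most one nonzero entry. -/
def IsRC {G : Type*} [Group G] {n : ℕ} (M : Matrix (Fin n) (Fin n) (GA G)) : Prop :=
  (∀ i, {j | M i j ≠ 0}.Subsingleton) ∧ (∀ j, {i | M i j ≠ 0}.Subsingleton) ∧
    ∀ i j, IsEnt (M i j)

theorem IsEnt.mul {G : Type*} [Group G] {a b : GA G} (ha : IsEnt a) (hb : IsEnt b) :
    IsEnt (a * b) := by
  rcases ha with ha | ⟨g, rfl⟩
  · exact Or.inl (by simp [ha])
  rcases hb with hb | ⟨g', rfl⟩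
  · exact Or.inl (by simp [hb])
  · exact Or.inr ⟨g * g', by simp [MonoidAlgebra.single_mul_single]⟩

theorem exists_of_mul_ne_zero {G : Type*} [Group G] {n : ℕ}
    {M N : Matrix (Fin n) (Fin n) (GA G)} {i j : Fin n} (h : (M * N) i j ≠ 0) :
    ∃ k, M i k ≠ 0 ∧ N k j ≠ 0 := by
  by_contra hc
  push_neg at hc
  apply h
  rw [Matrix.mul_apply]
  refine Finset.sum_eq_zero fun k _ => ?_
  by_cases hk : M i k = 0
  · simp [hk]
  · simp [hc k hk]

/-- The semigroup `Ḡ_n` of `n × n` matrices over `G ∪ {0}` with at most one nonzero entry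
in each row and each column, realized as a submonoid of the matrix ring over `ℤ[G]`. -/
def GBar (G : Type*) [Group G] (n : ℕ) : Submonoid (Matrix (Fin n) (Fin n) (GA G)) where
  carrier := {M | IsRC M}
  one_mem' := by
    have key : ∀ a b : Fin n, (1 : Matrix (Fin n) (Fin n) (GA G)) a b ≠ 0 → a = b := by
      intro a b h
      by_contra hab
      simp [Matrix.one_apply, hab] at h
    refine ⟨fun i => ?_, fun j => ?_, fun i j => ?_⟩
    · intro a ha b hb
      exact (key i a ha).symm.trans (key i b hb)
    · intro a ha b hb
      exact (key a j ha).trans (key b j hb).symm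
    · by_cases h : i = j
      · subst h
        exact Or.inr ⟨1, by simp [Matrix.one_apply, MonoidAlgebra.one_def]⟩
      · exact Or.inl (by simp [Matrix.one_apply, h])
  mul_mem' := by
    rintro M N ⟨hMr, hMc, hMe⟩ ⟨hNr, hNc, hNe⟩
    refine ⟨fun i => ?_, fun j => ?_, fun i j => ?_⟩
    · intro a ha b hb
      obtain ⟨k, hk1, hk2⟩ := exists_of_mul_ne_zero ha
      obtain ⟨k', hk1', hk2'⟩ := exists_of_mul_ne_zero hb
      have : k = k' := hMr i hk1 hk1'
      subst this
      exact hNr k hk2 hk2'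
    · intro a ha b hb
      obtain ⟨k, hk1, hk2⟩ := exists_of_mul_ne_zero ha
      obtain ⟨k', hk1', hk2'⟩ := exists_of_mul_ne_zero hb
      have : k = k' := hNc j hk2 hk2'
      subst this
      exact hMc k hk1 hk1'
    · by_cases h : (M * N) i j = 0
      · exact Or.inl h
      obtain ⟨k, hk1, hk2⟩ := exists_of_mul_ne_zero h
      have hsum : (M * N) i j = M i k * N k j := by
        rw [Matrix.mul_apply]
        refine Finset.sum_eq_single k (fun b _ hb => ?_) (by simp)
        by_cases hbz : M i b = 0
        · simp [hbz]
        · exact absurd (hMr i hbz hk1) hb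
      rw [hsum]
      exact (hMe i k).mul (hNe k j)

/-- The idempotent `ε_j ∈ Ḡ_n`: the diagonal matrix with `0` in position `(j,j)` and
`1` in the other diagonal positions. -/
noncomputable def epsEl (G : Type*) [Group G] {n : ℕ} (j : Fin n) : GBar G n :=
  ⟨Matrix.diagonal (fun i => if i = j then 0 else 1), by
    have key : ∀ a b : Fin n,
        Matrix.diagonal (fun i : Fin n => if i = j then (0 : GA G) else 1) a b ≠ 0 → a = b := by
      intro a b h
      by_contra hab
      simp [Matrix.diagonal_apply_ne _ hab] at h
    refine ⟨fun i => ?_, fun k => ?_, fun i k => ?_⟩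
    · intro a ha b hb
      exact (key i a ha).symm.trans (key i b hb)
    · intro a ha b hb
      exact (key a k ha).trans (key b k hb).symm
    · by_cases h : i = k
      · subst h
        by_cases hij : i = j
        · exact Or.inl (by simp [Matrix.diagonal_apply_eq, hij])
        · exact Or.inr ⟨1, by simp [Matrix.diagonal_apply_eq, hij, MonoidAlgebra.one_def]⟩
      · exact Or.inl (by simp [Matrix.diagonal_apply_ne _ h])⟩

/-- The monoid embedding of the wreath product `G_n` into the matrices over `G ∪ {0}`:
`(g,σ)` goes to the matrix whose `(i,j)` entry is `g_i` if `σ(j) = i` and `0` otherwise. -/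
noncomputable def wreathHom (G : Type*) [Group G] (n : ℕ) :
    Wreath G n →* Matrix (Fin n) (Fin n) (GA G) where
  toFun x := Matrix.of fun i j => if x.right j = i then single (x.left i) 1 else 0
  map_one' := by
    apply Matrix.ext
    intro i j
    by_cases h : i = j <;>
      simp [Matrix.one_apply, h, MonoidAlgebra.one_def, eq_comm]
  map_mul' := by
    rintro ⟨a, σ⟩ ⟨b, τ⟩
    apply Matrix.ext
    intro i j
    rw [Matrix.mul_apply, Finset.sum_eq_single (τ j)]
    · simp only [SemidirectProduct.mul_left, SemidirectProduct.mul_right, Matrix.of_apply]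
      rw [Equiv.Perm.mul_apply]
      by_cases h : σ (τ j) = i
      · rw [if_pos h, if_pos h]
        simp only [if_true]
        rw [MonoidAlgebra.single_mul_single]
        congr 1
        have hs : σ.symm i = τ j := by rw [← h]; simp
        simp [permHom, Pi.mul_apply, hs]
      · rw [if_neg h, if_neg h, zero_mul]
    · intro b' _ hb'
      simp only [Matrix.of_apply]
      exact mul_eq_zero_of_right _ (if_neg fun hc => hb' hc.symm)
    · simp

theorem wreathHom_mem_GBar (G : Type*) [Group G] (n : ℕ) (x : Wreath G n) :
    wreathHom G n x ∈ GBar G n := by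
  have key : ∀ i j : Fin n, wreathHom G n x i j ≠ 0 → x.right j = i := by
    intro i j h
    by_contra hc
    simp [wreathHom, hc] at h
  refine ⟨fun i => ?_, fun j => ?_, fun i j => ?_⟩
  · intro a ha b hb
    exact x.right.injective ((key i a ha).trans (key i b hb).symm)
  · intro a ha b hb
    exact (key a j ha).symm.trans (key b j hb)
  · by_cases h : x.right j = i
    · exact Or.inr ⟨x.left i, by simp [wreathHom, h]⟩
    · exact Or.inl (by simp [wreathHom, h])

/-- The wreath product `G_n` as the submonoid of `Ḡ_n` of matrices with exactly one
nonzero entry in each row and each column. -/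
noncomputable def GFull (G : Type*) [Group G] (n : ℕ) :
    Submonoid (Matrix (Fin n) (Fin n) (GA G)) :=
  MonoidHom.mrange (wreathHom G n)

theorem GFull_le_GBar (G : Type*) [Group G] (n : ℕ) : GFull G n ≤ GBar G n := by
  rintro M ⟨x, rfl⟩
  exact wreathHom_mem_GBar G n x

/-- An element of the wreath product, viewed inside `Ḡ_n`. -/
noncomputable def wEl {G : Type*} [Group G] {n : ℕ} (x : Wreath G n) : GBar G n :=
  ⟨wreathHom G n x, wreathHom_mem_GBar G n x⟩

/-! Inside `Ḡ_n` the complement of `G_n` is an ideal: if `M N ∈ G_n`, every row of `M` has a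
nonzero entry, which for a matrix of `Ḡ_n` forces `M ∈ G_n` (its nonzero entries then sit on the
graph of a permutation), and then `N = M⁻¹ (M N) ∈ G_n`. Hence sending the elements of `G_n` to
themselves and all other elements of `Ḡ_n` (among them the `ε_j`) to `0` is multiplicative, and
it extends linearly to `Φ`. -/

namespace Submonoid

variable {M : Type*} [Monoid M] (k : Type*) [Semiring k] {S T : Submonoid M}

open scoped Classical in
noncomputable def singleIfMemHom (hS : ∀ a ∈ T, ∀ b ∈ T, a * b ∈ S → a ∈ S ∧ b ∈ S) :
    T →* MonoidAlgebra k S where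
  toFun a := if h : (a : M) ∈ S then single ⟨a, h⟩ 1 else 0
  map_one' := dif_pos S.one_mem
  map_mul' a b := by
    by_cases hab : (a : M) * b ∈ S
    · obtain ⟨ha, hb⟩ := hS a a.2 b b.2 hab
      simp only [coe_mul, dif_pos hab, dif_pos ha, dif_pos hb, single_mul_single, one_mul]
      rfl
    · rcases not_and_or.mp fun h => hab (S.mul_mem h.1 h.2) with ha | hb
      · simp [hab, ha]
      · simp [hab, hb]

variable {k}

theorem singleIfMemHom_apply_of_mem (hS : ∀ a ∈ T, ∀ b ∈ T, a * b ∈ S → a ∈ S ∧ b ∈ S)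
    {a : T} (ha : (a : M) ∈ S) : singleIfMemHom k hS a = single ⟨a, ha⟩ 1 :=
  dif_pos ha

theorem singleIfMemHom_apply_of_notMem (hS : ∀ a ∈ T, ∀ b ∈ T, a * b ∈ S → a ∈ S ∧ b ∈ S)
    {a : T} (ha : (a : M) ∉ S) : singleIfMemHom k hS a = 0 :=
  dif_neg ha

end Submonoid

section

variable {G : Type*} [Group G] {n : ℕ} {M N : Matrix (Fin n) (Fin n) (GA G)}

theorem mem_GFull_iff (hM : M ∈ GBar G n) : M ∈ GFull G n ↔ ∀ i, ∃ j, M i j ≠ 0 := by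
  obtain ⟨hrow, hcol, hent⟩ := hM
  constructor
  · rintro ⟨x, rfl⟩ i
    exact ⟨x.right.symm i, by simp [wreathHom]⟩
  intro hr
  choose c hc using hr
  have hc_inj : Function.Injective c := fun i i' h =>
    hcol (c i) (hc i) (show M i' (c i) ≠ 0 from h ▸ hc i')
  let e := Equiv.ofBijective c (Finite.injective_iff_bijective.mp hc_inj)
  have hg : ∀ i, ∃ g : G, M i (c i) = single g 1 := fun i =>
    (hent i (c i)).resolve_left (hc i)
  choose g hg using hg
  refine ⟨⟨g, e.symm⟩, Matrix.ext fun i j => ?_⟩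
  change (if e.symm j = i then single (g i) 1 else 0) = M i j
  split_ifs with h
  · obtain rfl : c i = j := by rw [← h]; exact e.apply_symm_apply j
    exact (hg i).symm
  · by_contra hne
    exact h ((Equiv.symm_apply_eq e).mpr (hrow i (Ne.symm hne) (hc i)))

theorem mem_GFull_of_mul_mem_GFull (hM : M ∈ GBar G n) (h : M * N ∈ GFull G n) :
    M ∈ GFull G n ∧ N ∈ GFull G n := by
  have hM' : M ∈ GFull G n := by
    refine (mem_GFull_iff hM).mpr fun i => ?_
    obtain ⟨j, hj⟩ := (mem_GFull_iff (GFull_le_GBar G n h)).mp h i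
    obtain ⟨k, hk, -⟩ := exists_of_mul_ne_zero hj
    exact ⟨k, hk⟩
  refine ⟨hM', ?_⟩
  obtain ⟨x, rfl⟩ := hM'
  have hN : N = wreathHom G n x⁻¹ * (wreathHom G n x * N) := by
    rw [← mul_assoc, ← map_mul, inv_mul_cancel, map_one, one_mul]
  rw [hN]
  exact (GFull G n).mul_mem ⟨x⁻¹, rfl⟩ h

theorem epsEl_notMem_GFull (j : Fin n) :
    (epsEl G j : Matrix (Fin n) (Fin n) (GA G)) ∉ GFull G n := by
  intro h
  obtain ⟨k, hk⟩ := (mem_GFull_iff (epsEl G j).2).mp h j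
  exact hk (by simp [epsEl, Matrix.diagonal_apply])

end

/-- There is an algebra homomorphism `Φ : F[Ḡ_n] → F[G_n]` which maps each element of the
wreath product `G_n ⊆ Ḡ_n` to itself (in particular `g ↦ g` for `g ∈ G^n` and
`s_i ↦ (i,i+1)`), i.e. extends the identity map of the subalgebra `F[G_n]`, and kills the
idempotents: `ε_j ↦ 0` for all `j`. -/
theorem exists_retraction (F : Type*) [Field F] (G : Type*) [Group G] (n : ℕ) :
    ∃ Φ : MonoidAlgebra F (GBar G n) →ₐ[F] MonoidAlgebra F (GFull G n),
      (∀ x : Wreath G n,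
        Φ (single (wEl x) (1 : F)) =
          single (⟨wreathHom G n x, ⟨x, rfl⟩⟩ : GFull G n) (1 : F)) ∧
      (∀ j : Fin n, Φ (single (epsEl G j) (1 : F)) = 0) := by
  have hface : ∀ M ∈ GBar G n, ∀ N ∈ GBar G n, M * N ∈ GFull G n →
      M ∈ GFull G n ∧ N ∈ GFull G n := fun _ hM _ _ => mem_GFull_of_mul_mem_GFull hM
  refine ⟨MonoidAlgebra.lift F _ _ (Submonoid.singleIfMemHom F hface), fun x => ?_, fun j => ?_⟩
  · rw [MonoidAlgebra.lift_single, one_smul]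
    exact Submonoid.singleIfMemHom_apply_of_mem hface ⟨x, rfl⟩
  · rw [MonoidAlgebra.lift_single, one_smul]
    exact Submonoid.singleIfMemHom_apply_of_notMem hface (epsEl_notMem_GFull j)
end

section
/- For each partition-valued function ρ on G_* with ‖ρ‖ ≤ n, the element Δ_n^ρ = Σ_T C_{n,T}^ρ · Π_{i∈T}(1−ε_i), summed over ‖ρ‖-subsets T of {1,...,n}, lies in the center of the semigroup algebra F[Ḡ_n]. -/
/-!
The semigroup `Ḡ_n` is generated by the wreath product `G_n` and the idempotents `ε_j`: a matrix
with at most one nonzero entry per row and column is `g · ε_{j₁} ⋯ ε_{j_k}` with `g ∈ G_n`,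
the `j`'s being its zero columns. So it suffices that `Δ_n^ρ` commutes with both kinds of
generators.

Conjugation by `x ∈ G_n` permutes the summands of `C_n^ρ`, moving the support `T` to `x(T)`; the
conjugacy class of every cycle product is preserved because the conjugated product telescopes.
Since `x ε̄_T x⁻¹ = ε̄_{x(T)}`, conjugation by `x` only permutes the summands of `Δ_n^ρ`.

For `ε_j` and a summand `c ε̄_T`: if `j ∉ T`, then `c` fixes `j` and so commutes with `ε_j`, as
does `ε̄_T`. If `j ∈ T`, then `ε̄_T ε_j = 0`, and as `c` preserves `T` it commutes with `ε̄_T`,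
so both `ε_j c ε̄_T` and `c ε̄_T ε_j` vanish.
-/
open MonoidAlgebra

open scoped Classical

/-- A partition-valued function `ρ = (ρ(C))_{C ∈ G_*}` on the set of conjugacy classes of
`G`, encoded as the multiset of pairs (conjugacy class, part): `ρ(C)` is the multiset of
parts attached to the class `C`. -/
abbrev PartFun (G : Type*) [Group G] := Multiset (ConjClasses G × ℕ+)

/-- `‖ρ‖ = Σ_{C} |ρ(C)|`, the total size of a partition-valued function. -/
def PartFun.size {G : Type*} [Group G] (ρ : PartFun G) : ℕ :=
  (ρ.map fun p => ((p.2 : ℕ))).sum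

/-- The data indexing the summands of `C_{n}^{ρ}` (for `ρ` presented as a list `l` of its
parts): for each part a sequence of indices in `{1,…,n}`, all of them pairwise distinct,
together with `g ∈ G^n` such that each cycle-product lies in the prescribed conjugacy
class and `g_j = 1` for `j` outside the chosen indices. -/
abbrev CnData (G : Type*) [Group G] [Fintype G] (n : ℕ) (l : List (ConjClasses G × ℕ+)) :=
  { d : ((i : Fin l.length) → Fin ((l.get i).2 : ℕ) → Fin n) × (Fin n → G) //
    Function.Injective
      (fun p : Σ i : Fin l.length, Fin ((l.get i).2 : ℕ) => d.1 p.1 p.2) ∧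
    (∀ i : Fin l.length,
      ConjClasses.mk ((List.ofFn fun j => d.2 (d.1 i j)).reverse.prod) = (l.get i).1) ∧
    (∀ k : Fin n,
      (∀ p : Σ i : Fin l.length, Fin ((l.get i).2 : ℕ), d.1 p.1 p.2 ≠ k) → d.2 k = 1) }

/-- The element of `G_n` determined by a summand datum: the permutation is the product of
the cycles `(d_i(0), d_i(1), …)` and the group part is the chosen `g ∈ G^n`. -/
noncomputable def CnData.elem {G : Type*} [Group G] [Fintype G] {n : ℕ}
    {l : List (ConjClasses G × ℕ+)} (d : CnData G n l) : Wreath G n :=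
  ⟨d.1.2,
    (Equiv.Perm.extendDomain
      (Equiv.sigmaCongrRight fun i : Fin l.length => finRotate ((l.get i).2 : ℕ))
      (Equiv.ofInjective _ d.2.1))⟩

/-- The element `C_{n,•}^{ρ}` of `F[G_n]` associated with a list presentation of `ρ`:
the sum of `C_{n,T}^{ρ}` over all `‖ρ‖`-subsets `T` of `{1,…,n}` (the subset `T` being
recovered as the image of the index sequences). -/
noncomputable def CnList (F : Type*) [Field F] (G : Type*) [Group G] [Fintype G] (n : ℕ)
    (l : List (ConjClasses G × ℕ+)) : MonoidAlgebra F (Wreath G n) :=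
  haveI : Fintype (CnData G n l) := Fintype.ofFinite _
  ∑ d : CnData G n l, single d.elem (1 : F)

/-- The element `C_n^{ρ} ∈ F[G_n]`. -/
noncomputable def Cn (F : Type*) [Field F] (G : Type*) [Group G] [Fintype G] (n : ℕ) (ρ : PartFun G) :
    MonoidAlgebra F (Wreath G n) :=
  CnList F G n ρ.toList

/-- The set `T ⊆ {1,…,n}` of indices used by a summand datum (the union of the supports
of the cycles). -/
noncomputable def CnData.T {G : Type*} [Group G] [Fintype G] {n : ℕ}
    {l : List (ConjClasses G × ℕ+)} (d : CnData G n l) : Finset (Fin n) :=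
  Finset.univ.image (fun p : Σ i : Fin l.length, Fin ((l.get i).2 : ℕ) => d.1.1 p.1 p.2)

/-- `ε̄_T = Π_{i ∈ T} (1 − ε_i)` in `F[Ḡ_n]` (the factors pairwise commute; the product is
taken in increasing order of the indices). -/
noncomputable def epsBarT (F : Type*) [Field F] {G : Type*} [Group G] {n : ℕ}
    (T : Finset (Fin n)) : MonoidAlgebra F (GBar G n) :=
  ((T.sort (· ≤ ·)).map fun i => 1 - single (epsEl G i) (1 : F)).prod

/-- `Δ_n^{ρ} = Σ_T C_{n,T}^{ρ} ε̄_T ∈ F[Ḡ_n]`, for `ρ` presented as a list of parts. -/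
noncomputable def DeltaList (F : Type*) [Field F] (G : Type*) [Group G] [Fintype G] (n : ℕ)
    (l : List (ConjClasses G × ℕ+)) : MonoidAlgebra F (GBar G n) :=
  haveI : Fintype (CnData G n l) := Fintype.ofFinite _
  ∑ d : CnData G n l, single (wEl d.elem) (1 : F) * epsBarT F d.T

/-- The element `Δ_n^{ρ} ∈ F[Ḡ_n]`. -/
noncomputable def Delta (F : Type*) [Field F] (G : Type*) [Group G] [Fintype G] (n : ℕ)
    (ρ : PartFun G) : MonoidAlgebra F (GBar G n) :=
  DeltaList F G n ρ.toList
theorem List.reverse_prod_ofFn_telescope {H : Type*} [Group H] (a b : ℕ → H) :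
    ∀ m : ℕ, (List.ofFn fun j : Fin m => a (j + 1) * b j * (a j)⁻¹).reverse.prod
      = a m * (List.ofFn fun j : Fin m => b j).reverse.prod * (a 0)⁻¹
  | 0 => by simp
  | m + 1 => by
    simp only [List.ofFn_succ', List.concat_eq_append, List.reverse_append, List.reverse_cons,
      List.reverse_nil, List.nil_append, List.cons_append, List.prod_cons, Fin.val_last,
      Fin.val_castSucc, reverse_prod_ofFn_telescope a b m]
    group

open Fin.NatCast in
theorem isConj_reverse_prod_ofFn_finRotate {H : Type*} [Group H] {m : ℕ} [NeZero m]
    (a b : Fin m → H) :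
    IsConj (List.ofFn b).reverse.prod
      (List.ofFn fun j => a j * b j * (a ((finRotate m).symm j))⁻¹).reverse.prod := by
  -- extend `a` and `b` periodically to `ℕ`, shifting `a` so that the product telescopes
  set a' : ℕ → H := fun t => a ((t : Fin m) - 1)
  set b' : ℕ → H := fun t => b t
  have hb : List.ofFn b = List.ofFn fun j : Fin m => b' j := by simp [b']
  have hab : (List.ofFn fun j => a j * b j * (a ((finRotate m).symm j))⁻¹)
      = List.ofFn fun j : Fin m => a' (j + 1) * b' j * (a' j)⁻¹ := by
    simp [a', b', finRotate_symm_apply]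
  have hper : a' m = a' 0 := by simp [a']
  rw [hb, hab, List.reverse_prod_ofFn_telescope, hper, isConj_comm, isConj_iff]
  exact ⟨(a' 0)⁻¹, by group⟩

theorem MonoidAlgebra.mem_center_of_commute_of_closure_eq_top {k M : Type*} [CommSemiring k]
    [Monoid M] {s : Set M} (hs : Submonoid.closure s = ⊤) {a : MonoidAlgebra k M}
    (ha : ∀ m ∈ s, Commute (of k M m) a) : a ∈ Subalgebra.center k (MonoidAlgebra k M) := by
  have hof (m : M) : Commute (of k M m) a := by
    induction hs.ge (Submonoid.mem_top m) using Submonoid.closure_induction with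
    | mem m hm => exact ha m hm
    | one => simp
    | mul x y _ _ hx hy => simpa using hx.mul_left hy
  rw [Subalgebra.mem_center_iff]
  intro b
  induction b using MonoidAlgebra.induction_on with
  | of m => exact (hof m).eq
  | add f g hf hg => rw [add_mul, mul_add, hf, hg]
  | smul r f hf => rw [smul_mul_assoc, mul_smul_comm, hf]

section GBar
variable {G : Type*} [Group G] {n : ℕ}

theorem coe_epsEl (j : Fin n) :
    (epsEl G j : Matrix (Fin n) (Fin n) (GA G)) = Matrix.diagonal fun i => if i = j then 0 else 1 :=
  rfl

theorem commute_epsEl (i j : Fin n) : Commute (epsEl G i) (epsEl G j) := by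
  refine Subtype.ext ?_
  simp only [Submonoid.coe_mul, coe_epsEl, Matrix.diagonal_mul_diagonal]
  congr 1
  grind

theorem isIdempotentElem_epsEl (j : Fin n) : IsIdempotentElem (epsEl G j) := by
  refine Subtype.ext ?_
  simp only [Submonoid.coe_mul, coe_epsEl, Matrix.diagonal_mul_diagonal]
  congr 1
  grind

theorem coe_list_prod_epsEl (L : List (Fin n)) :
    ((L.map (epsEl G)).prod : Matrix (Fin n) (Fin n) (GA G))
      = Matrix.diagonal fun i => if i ∈ L then 0 else 1 := by
  induction L with
  | nil => simp [Matrix.diagonal_one]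
  | cons a L ih =>
    simp only [List.map_cons, List.prod_cons, Submonoid.coe_mul, ih, coe_epsEl,
      Matrix.diagonal_mul_diagonal, List.mem_cons]
    congr 1
    grind

theorem coe_wEl (x : Wreath G n) : (wEl x : Matrix (Fin n) (Fin n) (GA G)) = wreathHom G n x :=
  rfl

theorem wreathHom_apply (x : Wreath G n) (i j : Fin n) :
    wreathHom G n x i j = if x.right j = i then single (x.left i) 1 else 0 :=
  rfl

theorem wEl_mul (x y : Wreath G n) : wEl (x * y) = wEl x * wEl y :=
  Subtype.ext (map_mul (wreathHom G n) x y)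

theorem wEl_mul_epsEl (x : Wreath G n) (j : Fin n) :
    wEl x * epsEl G j = epsEl G (x.right j) * wEl x := by
  refine Subtype.ext (Matrix.ext fun i k => ?_)
  simp only [Submonoid.coe_mul, coe_wEl, coe_epsEl, Matrix.mul_diagonal, Matrix.diagonal_mul,
    wreathHom_apply]
  by_cases hk : x.right k = i
  · subst hk
    simp
  · simp [hk]

theorem IsRC.exists_perm {M : Matrix (Fin n) (Fin n) (GA G)} (hM : IsRC M) :
    ∃ σ : Equiv.Perm (Fin n), ∀ i j, M i j ≠ 0 → σ j = i := by
  obtain ⟨hrow, hcol, -⟩ := hM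
  choose r hr using fun j : {j // ∃ i, M i j ≠ 0} => j.2
  have hr_inj : Function.Injective r := fun j j' h =>
    Subtype.ext (hrow _ (hr j) (h ▸ hr j'))
  refine ⟨(Equiv.ofInjective r hr_inj).extendSubtype, fun i j hij => ?_⟩
  rw [Equiv.extendSubtype_apply_of_mem _ j ⟨i, hij⟩]
  exact hcol j (hr _) hij

theorem IsRC.exists_eq_wreathHom_mul_diagonal {M : Matrix (Fin n) (Fin n) (GA G)} (hM : IsRC M) :
    ∃ (x : Wreath G n) (S : Finset (Fin n)),
      M = wreathHom G n x * Matrix.diagonal fun j => if j ∈ S then 0 else 1 := by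
  obtain ⟨σ, hσ⟩ := hM.exists_perm
  have hent : ∀ i j, ∃ g, M i j ≠ 0 → M i j = single g 1 := fun i j =>
    (hM.2.2 i j).elim (fun h => ⟨1, absurd h⟩) fun ⟨g, h⟩ => ⟨g, fun _ => h⟩
  choose g hg using hent
  refine ⟨⟨fun i => g i (σ⁻¹ i), σ⟩, Finset.univ.filter fun j => ∀ i, M i j = 0,
    Matrix.ext fun i j => ?_⟩
  simp only [Matrix.mul_diagonal, wreathHom_apply, Finset.mem_filter, Finset.mem_univ, true_and]
  by_cases hzero : ∀ i, M i j = 0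
  · simp [hzero]
  obtain ⟨i₀, hi₀⟩ := not_forall.1 hzero
  by_cases hi : i = i₀
  · subst hi
    have hσj := hσ _ _ hi₀
    have hσi : σ⁻¹ i = j := by simp [← hσj]
    simp [hzero, hσj, hσi, hg _ _ hi₀]
  · have hMij : M i j = 0 := by
      by_contra h
      exact hi (hM.2.1 j h hi₀)
    simp [hMij, hσ _ _ hi₀, Ne.symm hi]

theorem exists_eq_wEl_mul_list_prod_epsEl (M : GBar G n) :
    ∃ (x : Wreath G n) (L : List (Fin n)), M = wEl x * (L.map (epsEl G)).prod := by
  obtain ⟨x, S, hM⟩ := IsRC.exists_eq_wreathHom_mul_diagonal M.2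
  refine ⟨x, S.toList, Subtype.ext ?_⟩
  rw [Submonoid.coe_mul, coe_wEl, coe_list_prod_epsEl]
  simpa using hM

theorem closure_range_wEl_union_range_epsEl :
    Submonoid.closure (Set.range (wEl (G := G) (n := n)) ∪ Set.range (epsEl G)) = ⊤ := by
  refine eq_top_iff.2 fun M _ => ?_
  obtain ⟨x, L, rfl⟩ := exists_eq_wEl_mul_list_prod_epsEl M
  refine mul_mem (Submonoid.subset_closure (Or.inl ⟨x, rfl⟩)) (list_prod_mem fun e he => ?_)
  obtain ⟨j, -, rfl⟩ := List.mem_map.1 he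
  exact Submonoid.subset_closure (Or.inr ⟨j, rfl⟩)

end GBar

theorem Wreath.conj_left_apply {G : Type*} [Group G] {n : ℕ} (x u : Wreath G n) (k : Fin n) :
    (x * u * x⁻¹).left k =
      x.left k * u.left (x.right.symm k) *
        (x.left (x.right (u.right.symm (x.right.symm k))))⁻¹ := by
  simp [permHom, mul_assoc, Equiv.Perm.inv_def]

abbrev CnIndex {G : Type*} [Group G] (l : List (ConjClasses G × ℕ+)) :=
  Σ i : Fin l.length, Fin ((l.get i).2 : ℕ)

namespace CnData
variable {G : Type*} [Group G] [Fintype G] {n : ℕ} {l : List (ConjClasses G × ℕ+)}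

theorem mem_T {d : CnData G n l} {k : Fin n} :
    k ∈ d.T ↔ ∃ p : CnIndex l, d.1.1 p.1 p.2 = k := by
  simp [CnData.T]

theorem elem_right_apply (d : CnData G n l) (p : CnIndex l) :
    d.elem.right (d.1.1 p.1 p.2) = d.1.1 p.1 (finRotate _ p.2) := by
  simpa [CnData.elem] using Equiv.Perm.extendDomain_apply_image
    (Equiv.sigmaCongrRight fun i : Fin l.length => finRotate ((l.get i).2 : ℕ))
    (Equiv.ofInjective _ d.2.1) p

theorem elem_right_symm_apply (d : CnData G n l) (p : CnIndex l) :
    d.elem.right.symm (d.1.1 p.1 p.2) = d.1.1 p.1 ((finRotate _).symm p.2) := by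
  rw [Equiv.symm_apply_eq]
  simpa using (elem_right_apply d ⟨p.1, (finRotate _).symm p.2⟩).symm

theorem elem_right_of_notMem (d : CnData G n l) {k : Fin n} (hk : k ∉ d.T) :
    d.elem.right k = k := by
  exact Equiv.Perm.extendDomain_apply_not_subtype _ _ fun ⟨p, hp⟩ => hk (mem_T.2 ⟨p, hp⟩)

theorem elem_right_eq (d : CnData G n l) {σ : Equiv.Perm (Fin n)}
    (hT : ∀ p : CnIndex l, σ (d.1.1 p.1 p.2) = d.1.1 p.1 (finRotate _ p.2))
    (hTc : ∀ k ∉ d.T, σ k = k) : d.elem.right = σ := by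
  ext k
  by_cases hk : k ∈ d.T
  · obtain ⟨p, rfl⟩ := mem_T.1 hk
    rw [elem_right_apply, hT]
  · rw [elem_right_of_notMem d hk, hTc k hk]

theorem image_elem_right_T (d : CnData G n l) : d.T.image d.elem.right = d.T := by
  have hrot : (d.elem.right ∘ fun p : CnIndex l => d.1.1 p.1 p.2)
      = (fun p : CnIndex l => d.1.1 p.1 p.2) ∘
          Equiv.sigmaCongrRight fun i => finRotate ((l.get i).2 : ℕ) :=
    funext (elem_right_apply d)
  rw [CnData.T, Finset.image_image, hrot, ← Finset.image_image, Finset.image_univ_equiv]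

theorem elem_left (d : CnData G n l) : d.elem.left = d.1.2 := rfl

noncomputable def conj (x : Wreath G n) (d : CnData G n l) : CnData G n l :=
  ⟨(fun i j => x.right (d.1.1 i j), (x * d.elem * x⁻¹).left),
    fun _ _ h => d.2.1 (x.right.injective h),
    fun i => by
      rw [← d.2.2.1 i, ConjClasses.mk_eq_mk_iff_isConj, isConj_comm]
      convert isConj_reverse_prod_ofFn_finRotate
        (fun j => x.left (x.right (d.1.1 i j))) (fun j => d.1.2 (d.1.1 i j)) using 4
      funext j
      dsimp only
      rw [Wreath.conj_left_apply, Equiv.symm_apply_apply, elem_right_symm_apply d ⟨i, j⟩,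
        elem_left],
    fun k hk => by
      have hk' : x.right.symm k ∉ d.T := fun h => by
        obtain ⟨p, hp⟩ := mem_T.1 h
        exact hk p (by simp [hp])
      have hfix : d.elem.right.symm (x.right.symm k) = x.right.symm k := by
        rw [Equiv.symm_apply_eq, elem_right_of_notMem d hk']
      simp only [Wreath.conj_left_apply, hfix, elem_left,
        d.2.2.2 _ fun p hp => hk' (mem_T.2 ⟨p, hp⟩)]
      simp⟩

theorem conj_T (x : Wreath G n) (d : CnData G n l) : (d.conj x).T = d.T.image x.right := by
  simp only [CnData.T, Finset.image_image]
  rfl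

theorem conj_elem (x : Wreath G n) (d : CnData G n l) : (d.conj x).elem = x * d.elem * x⁻¹ := by
  refine SemidirectProduct.ext rfl (elem_right_eq _ (fun p => ?_) fun k hk => ?_)
  · simp [conj, elem_right_apply]
  · have hk' : x.right.symm k ∉ d.T := fun h =>
      hk (conj_T x d ▸ Finset.mem_image.2 ⟨_, h, x.right.apply_symm_apply k⟩)
    simp [elem_right_of_notMem d hk']

theorem conj_conj_inv (x : Wreath G n) (d : CnData G n l) : (d.conj x).conj x⁻¹ = d := by
  refine Subtype.ext (Prod.ext (funext₂ fun i j => ?_) ?_)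
  · simp [conj]
  · change (x⁻¹ * (d.conj x).elem * x⁻¹⁻¹).left = d.1.2
    rw [conj_elem]
    simp [mul_assoc, elem_left]

noncomputable def conjEquiv (x : Wreath G n) : CnData G n l ≃ CnData G n l where
  toFun := conj x
  invFun := conj x⁻¹
  left_inv := conj_conj_inv x
  right_inv d := by simpa using conj_conj_inv x⁻¹ d

end CnData

section EpsBar
variable {F : Type*} [Field F] {G : Type*} [Group G] {n : ℕ}

theorem commute_single_epsEl (i j : Fin n) :
    Commute (single (epsEl G i) (1 : F)) (single (epsEl G j) 1) :=
  (commute_epsEl i j).map (of F (GBar G n))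

theorem commute_one_sub_single_epsEl (i j : Fin n) :
    Commute (1 - single (epsEl G i) (1 : F)) (1 - single (epsEl G j) 1) :=
  (Commute.one_right _).sub_right ((Commute.one_left _).sub_left (commute_single_epsEl i j))

theorem commute_single_epsEl_list_prod (k : Fin n) (L : List (Fin n)) :
    Commute (single (epsEl G k) (1 : F)) (L.map fun i => 1 - single (epsEl G i) (1 : F)).prod :=
  Commute.list_prod_right _ _ fun a ha => by
    obtain ⟨i, -, rfl⟩ := List.mem_map.1 ha
    exact (Commute.one_right _).sub_right (commute_single_epsEl k i)

theorem commute_single_epsEl_epsBarT (k : Fin n) (T : Finset (Fin n)) :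
    Commute (single (epsEl G k) (1 : F)) (epsBarT F T) :=
  commute_single_epsEl_list_prod k _

theorem one_sub_single_epsEl_mul_self (k : Fin n) :
    (1 - single (epsEl G k) (1 : F)) * single (epsEl G k) 1 = 0 := by
  rw [sub_mul, one_mul, single_mul_single, one_mul, isIdempotentElem_epsEl k, sub_self]

theorem epsBarT_mul_single_epsEl {k : Fin n} {T : Finset (Fin n)} (hk : k ∈ T) :
    epsBarT F T * single (epsEl G k) 1 = 0 := by
  suffices ∀ L : List (Fin n), k ∈ L →
      (L.map fun i => 1 - single (epsEl G i) (1 : F)).prod * single (epsEl G k) 1 = 0 from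
    this _ ((Finset.mem_sort _).2 hk)
  intro L hL
  induction L with
  | nil => simp at hL
  | cons a L ih =>
    rw [List.map_cons, List.prod_cons, mul_assoc]
    rcases List.mem_cons.1 hL with rfl | hL
    · rw [← (commute_single_epsEl_list_prod k L).eq, ← mul_assoc,
        one_sub_single_epsEl_mul_self, zero_mul]
    · rw [ih hL, mul_zero]

theorem single_wEl_mul_single_epsEl (x : Wreath G n) (j : Fin n) :
    single (wEl x) (1 : F) * single (epsEl G j) 1
      = single (epsEl G (x.right j)) 1 * single (wEl x) 1 := by
  rw [single_mul_single, single_mul_single, wEl_mul_epsEl]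

theorem epsBarT_image (σ : Equiv.Perm (Fin n)) (T : Finset (Fin n)) :
    epsBarT F (T.image σ)
      = (((T.sort (· ≤ ·)).map σ).map fun i => 1 - single (epsEl G i) (1 : F)).prod := by
  refine List.Perm.prod_eq' (List.Perm.map _ ?_) (List.pairwise_map.2 ?_)
  · refine (List.perm_ext_iff_of_nodup (Finset.sort_nodup _ _)
      ((Finset.sort_nodup _ _).map σ.injective)).2 fun a => ?_
    simp
  · exact List.pairwise_of_forall_sublist fun {a b} _ => commute_one_sub_single_epsEl a b

theorem single_wEl_mul_epsBarT (x : Wreath G n) (T : Finset (Fin n)) :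
    single (wEl x) (1 : F) * epsBarT F T = epsBarT F (T.image x.right) * single (wEl x) 1 := by
  have hfactor (j : Fin n) : single (wEl x) (1 : F) * (1 - single (epsEl G j) 1)
      = (1 - single (epsEl G (x.right j)) 1) * single (wEl x) 1 := by
    rw [mul_sub, sub_mul, mul_one, one_mul, single_wEl_mul_single_epsEl]
  rw [epsBarT_image, epsBarT]
  induction T.sort (· ≤ ·) with
  | nil => simp
  | cons a L ih =>
    simp only [List.map_cons, List.prod_cons]
    rw [← mul_assoc, hfactor, mul_assoc, ih, ← mul_assoc]

end EpsBar

section Delta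
variable {F : Type*} [Field F] {G : Type*} [Group G] [Fintype G] {n : ℕ}
  {l : List (ConjClasses G × ℕ+)}

theorem DeltaList_eq_sum [Fintype (CnData G n l)] :
    DeltaList F G n l = ∑ d : CnData G n l, single (wEl d.elem) (1 : F) * epsBarT F d.T := by
  rw [DeltaList]
  congr!

theorem CnData.commute_single_wEl_epsBarT (d : CnData G n l) :
    Commute (single (wEl d.elem) (1 : F)) (epsBarT F d.T) := by
  rw [Commute, SemiconjBy, single_wEl_mul_epsBarT, d.image_elem_right_T]

theorem CnData.commute_single_epsEl_summand (d : CnData G n l) (j : Fin n) :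
    Commute (single (epsEl G j) (1 : F)) (single (wEl d.elem) 1 * epsBarT F d.T) := by
  by_cases hj : j ∈ d.T
  · rw [Commute, SemiconjBy, mul_assoc, epsBarT_mul_single_epsEl hj, mul_zero,
      d.commute_single_wEl_epsBarT.eq, ← mul_assoc, (commute_single_epsEl_epsBarT j d.T).eq,
      epsBarT_mul_single_epsEl hj, zero_mul]
  · have hw : Commute (single (epsEl G j) (1 : F)) (single (wEl d.elem) 1) := by
      rw [Commute, SemiconjBy, single_wEl_mul_single_epsEl, d.elem_right_of_notMem hj]
    exact hw.mul_right (commute_single_epsEl_epsBarT j d.T)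

theorem commute_single_epsEl_DeltaList (j : Fin n) :
    Commute (single (epsEl G j) (1 : F)) (DeltaList F G n l) := by
  rw [DeltaList]
  exact Commute.sum_right _ _ _ fun d _ => d.commute_single_epsEl_summand j

theorem commute_single_wEl_DeltaList (x : Wreath G n) :
    Commute (single (wEl x) (1 : F)) (DeltaList F G n l) := by
  rw [DeltaList_eq_sum, Commute, SemiconjBy, Finset.mul_sum, Finset.sum_mul]
  refine Fintype.sum_equiv (CnData.conjEquiv x) _ _ fun d => ?_
  change _ = single (wEl (d.conj x).elem) 1 * epsBarT F (d.conj x).T * _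
  rw [CnData.conj_elem, CnData.conj_T, mul_assoc, ← single_wEl_mul_epsBarT, ← mul_assoc,
    ← mul_assoc, single_mul_single, single_mul_single, one_mul, ← wEl_mul, ← wEl_mul,
    inv_mul_cancel_right]

end Delta

theorem Delta_mem_center_general (F : Type*) [Field F] (G : Type*) [Group G] [Fintype G] (n : ℕ)
    (ρ : PartFun G) :
    Delta F G n ρ ∈ Subalgebra.center F (MonoidAlgebra F (GBar G n)) := by
  refine MonoidAlgebra.mem_center_of_commute_of_closure_eq_top
    closure_range_wEl_union_range_epsEl ?_
  rintro _ (⟨x, rfl⟩ | ⟨j, rfl⟩)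
  · exact commute_single_wEl_DeltaList x
  · exact commute_single_epsEl_DeltaList j

/-- For every partition-valued function `ρ` on `G_*` with `‖ρ‖ ≤ n`, the element
`Δ_n^{ρ} = Σ_T C_{n,T}^{ρ} ε̄_T` lies in the center of the semigroup algebra `F[Ḡ_n]`. -/
theorem Delta_mem_center (F : Type*) [Field F] (G : Type*) [Group G] [Fintype G] (n : ℕ)
    (ρ : PartFun G) (h : ρ.size ≤ n) :
    Delta F G n ρ ∈ Subalgebra.center F (MonoidAlgebra F (GBar G n)) :=
  Delta_mem_center_general F G n ρ
end
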